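/- Wick's theorem for Gaussian (Grassmann) moments: if M is a 2n×2n antisymmetric matrix over a commutative ring and ω is the linear functional on the exterior algebra of a 2n-dimensional space determined by ω(e_i ∧ e_j) = M_{ij} for i<j extended by the Pfaffian rule, then ω(e_{i₁} ∧ ⋯ ∧ e_{i_{2k}}) = Pf(M|_{i₁,…,i_{2k}}), the Pfaffian of the submatrix of M on the rows and columns i₁ < ⋯ < i_{2k}. -/

import Mathlib

open Matrix

/-- The Pfaffian of an antisymmetric `2k x 2k` matrix as a sum over perfect matchings:
each perfect matching is encoded by the unique permutation `s` with
`s(0) < s(1), s(2) < s(3), ...` (ordered pairs) and `s(0) < s(2) < s(4) < ...`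
(ordered list of pairs), and contributes `sgn(s) * prod_i A_{s(2i), s(2i+1)}`. -/
def pfMatchings {R : Type*} [CommRing R] {k : ℕ}
    (A : Matrix (Fin (2 * k)) (Fin (2 * k)) R) : R :=
  ∑ σ ∈ Finset.univ.filter (fun σ : Equiv.Perm (Fin (2 * k)) =>
      (∀ i : Fin k, σ ⟨2 * (i : ℕ), by omega⟩ < σ ⟨2 * (i : ℕ) + 1, by omega⟩) ∧
      (∀ i j : Fin k, i < j →
        σ ⟨2 * (i : ℕ), by omega⟩ < σ ⟨2 * (j : ℕ), by omega⟩)),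
    ((Equiv.Perm.sign σ : ℤ) : R) *
      ∏ i : Fin k, A (σ ⟨2 * (i : ℕ), by omega⟩) (σ ⟨2 * (i : ℕ) + 1, by omega⟩)

/-!
By induction on `k`: the Wick rule for `ω` is the expansion of a Pfaffian along its first row.
A normalized matching `σ` of `0, …, 2k+1` pairs `0` with some `j + 1`, and deleting that pair
leaves a normalized matching `τ` of the other `2k` points, relabelled in their natural order.
As permutations `σ = matchZeroWith j τ`, which is `τ` followed by a cycle of length `j + 1`,
whence `sign σ = (-1) ^ j * sign τ`.
-/

open Equiv Equiv.Perm Finset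

section PfaffianPerm

variable {k : ℕ}

def pairFst (i : Fin k) : Fin (2 * k) := ⟨2 * i, by omega⟩

def pairSnd (i : Fin k) : Fin (2 * k) := ⟨2 * i + 1, by omega⟩

def IsPfaffianPerm (σ : Perm (Fin (2 * k))) : Prop :=
  (∀ i, σ (pairFst i) < σ (pairSnd i)) ∧ StrictMono fun i ↦ σ (pairFst i)

-- This is the instance `pfMatchings` uses, so `pfMatchings_eq_sum_pfTerm` holds by `rfl`.
instance : DecidablePred (IsPfaffianPerm (k := k)) := fun _ ↦ by
  unfold IsPfaffianPerm StrictMono; infer_instance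

def pfTerm {R : Type*} [CommRing R] (A : Matrix (Fin (2 * k)) (Fin (2 * k)) R)
    (σ : Perm (Fin (2 * k))) : R :=
  ((sign σ : ℤ) : R) * ∏ i, A (σ (pairFst i)) (σ (pairSnd i))

lemma pfMatchings_eq_sum_pfTerm {R : Type*} [CommRing R]
    (A : Matrix (Fin (2 * k)) (Fin (2 * k)) R) :
    pfMatchings A = ∑ σ ∈ univ.filter IsPfaffianPerm, pfTerm A σ := rfl

lemma pairFst_zero : pairFst (k := k + 1) 0 = (0 : Fin (2 * k + 2)) := rfl

lemma pairSnd_zero : pairSnd (k := k + 1) 0 = (1 : Fin (2 * k + 2)) := rfl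

lemma pairFst_succ (i : Fin k) : pairFst i.succ = (pairFst i).succ.succ :=
  Fin.ext (by simp [pairFst]; ring)

lemma pairSnd_succ (i : Fin k) : pairSnd i.succ = (pairSnd i).succ.succ :=
  Fin.ext (by simp [pairSnd]; ring)

lemma exists_eq_pairFst_or_eq_pairSnd (u : Fin (2 * k)) :
    ∃ i, u = pairFst i ∨ u = pairSnd i :=
  ⟨⟨u / 2, by omega⟩, by simp only [pairFst, pairSnd, Fin.ext_iff]; omega⟩

lemma IsPfaffianPerm.apply_zero {σ : Perm (Fin (2 * k + 2))}
    (hσ : IsPfaffianPerm (k := k + 1) σ) : σ 0 = 0 := by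
  have hmin (u : Fin (2 * k + 2)) : σ 0 ≤ σ u := by
    obtain ⟨i, rfl | rfl⟩ := exists_eq_pairFst_or_eq_pairSnd (k := k + 1) u
    · exact hσ.2.monotone (Fin.zero_le i)
    · exact (hσ.2.monotone (Fin.zero_le i)).trans (hσ.1 i).le
  exact le_antisymm (by simpa using hmin (σ.symm 0)) (Fin.zero_le _)

end PfaffianPerm

namespace Equiv.Perm

variable {n : ℕ}

def consSuccAbove (p : Fin (n + 1)) (τ : Perm (Fin n)) : Perm (Fin (n + 1)) :=
  (Fin.cycleRange p).symm * decomposeFin.symm (0, τ)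

@[simp] lemma consSuccAbove_zero (p : Fin (n + 1)) (τ : Perm (Fin n)) :
    consSuccAbove p τ 0 = p := by
  simp [consSuccAbove, decomposeFin_symm_apply_zero]

@[simp] lemma consSuccAbove_succ (p : Fin (n + 1)) (τ : Perm (Fin n)) (t : Fin n) :
    consSuccAbove p τ t.succ = p.succAbove (τ t) := by
  simp [consSuccAbove, decomposeFin_symm_apply_succ, Fin.cycleRange_symm_succ]

lemma sign_consSuccAbove (p : Fin (n + 1)) (τ : Perm (Fin n)) :
    sign (consSuccAbove p τ) = (-1) ^ (p : ℕ) * sign τ := by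
  simp [consSuccAbove, decomposeFin.symm_sign, Fin.sign_cycleRange]

lemma exists_consSuccAbove_eq (σ : Perm (Fin (n + 1))) : ∃ τ, consSuccAbove (σ 0) τ = σ := by
  obtain ⟨⟨p, τ⟩, hπ⟩ := decomposeFin.symm.surjective (Fin.cycleRange (σ 0) * σ)
  have hp : p = 0 := by
    simpa [decomposeFin_symm_apply_zero, Fin.cycleRange_self] using congr($hπ 0)
  subst hp
  refine ⟨τ, ?_⟩
  rw [consSuccAbove, hπ, ← Perm.inv_def, inv_mul_cancel_left]

lemma consSuccAbove_injective2 : Function.Injective2 (consSuccAbove (n := n)) := by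
  intro p p' τ τ' h
  have hp : p = p' := by simpa using congr($h 0)
  subst hp
  refine ⟨rfl, Equiv.ext fun t ↦ ?_⟩
  simpa using congr($h t.succ)

def matchZeroWith (j : Fin (n + 1)) (τ : Perm (Fin n)) : Perm (Fin (n + 2)) :=
  decomposeFin.symm (0, consSuccAbove j τ)

@[simp] lemma matchZeroWith_zero (j : Fin (n + 1)) (τ : Perm (Fin n)) :
    matchZeroWith j τ 0 = 0 :=
  decomposeFin_symm_apply_zero _ _

@[simp] lemma matchZeroWith_one (j : Fin (n + 1)) (τ : Perm (Fin n)) :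
    matchZeroWith j τ 1 = j.succ := by
  simp [matchZeroWith, decomposeFin_symm_apply_one]

@[simp] lemma matchZeroWith_succ_succ (j : Fin (n + 1)) (τ : Perm (Fin n)) (t : Fin n) :
    matchZeroWith j τ t.succ.succ = (j.succAbove (τ t)).succ := by
  simp [matchZeroWith, decomposeFin_symm_apply_succ]

lemma sign_matchZeroWith (j : Fin (n + 1)) (τ : Perm (Fin n)) :
    sign (matchZeroWith j τ) = (-1) ^ (j : ℕ) * sign τ := by
  simp [matchZeroWith, decomposeFin.symm_sign, sign_consSuccAbove]

lemma matchZeroWith_injective2 : Function.Injective2 (matchZeroWith (n := n)) := by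
  intro j j' τ τ' h
  exact consSuccAbove_injective2 (Prod.ext_iff.1 (decomposeFin.symm.injective h)).2

lemma exists_matchZeroWith_eq {σ : Perm (Fin (n + 2))} (hσ : σ 0 = 0) :
    ∃ j τ, matchZeroWith j τ = σ := by
  obtain ⟨⟨p, π⟩, rfl⟩ := decomposeFin.symm.surjective σ
  rw [decomposeFin_symm_apply_zero] at hσ
  subst hσ
  obtain ⟨τ, hτ⟩ := exists_consSuccAbove_eq π
  exact ⟨π 0, τ, by rw [matchZeroWith, hτ]⟩

end Equiv.Perm

section FirstRowExpansion

variable {k : ℕ}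

lemma isPfaffianPerm_matchZeroWith_iff (j : Fin (2 * k + 1)) (τ : Perm (Fin (2 * k))) :
    IsPfaffianPerm (k := k + 1) (matchZeroWith j τ) ↔ IsPfaffianPerm τ := by
  have hemb : StrictMono fun t ↦ (j.succAbove t).succ :=
    Fin.strictMono_succ.comp (Fin.strictMono_succAbove j)
  have hfun : (fun i ↦ matchZeroWith j τ (pairFst i)) =
      Fin.cons 0 fun i ↦ (j.succAbove (τ (pairFst i))).succ := by
    refine funext (Fin.cases ?_ fun i ↦ ?_)
    · simp [pairFst_zero]
    · simp [pairFst_succ]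
  rw [IsPfaffianPerm, IsPfaffianPerm, hfun, Fin.strictMono_cons, Fin.forall_fin_succ]
  simp [pairFst_zero, pairSnd_zero, pairFst_succ, pairSnd_succ, hemb.lt_iff_lt, StrictMono,
    Fin.succ_pos]

lemma pfTerm_matchZeroWith {R : Type*} [CommRing R]
    (A : Matrix (Fin (2 * k + 2)) (Fin (2 * k + 2)) R) (j : Fin (2 * k + 1))
    (τ : Perm (Fin (2 * k))) :
    pfTerm (k := k + 1) A (matchZeroWith j τ) = (-1) ^ (j : ℕ) * A 0 j.succ *
      pfTerm (A.submatrix (fun t ↦ (j.succAbove t).succ) fun t ↦ (j.succAbove t).succ) τ := by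
  simp only [pfTerm, sign_matchZeroWith, Fin.prod_univ_succ, pairFst_zero, pairSnd_zero,
    pairFst_succ, pairSnd_succ, matchZeroWith_zero, matchZeroWith_one, matchZeroWith_succ_succ,
    Matrix.submatrix_apply]
  push_cast
  ring

theorem pfMatchings_succ {R : Type*} [CommRing R]
    (A : Matrix (Fin (2 * k + 2)) (Fin (2 * k + 2)) R) :
    pfMatchings (k := k + 1) A = ∑ j : Fin (2 * k + 1), (-1) ^ (j : ℕ) * A 0 j.succ *
      pfMatchings (A.submatrix (fun t ↦ (j.succAbove t).succ) fun t ↦ (j.succAbove t).succ) := by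
  simp_rw [pfMatchings_eq_sum_pfTerm, Finset.mul_sum, ← Finset.sum_product']
  symm
  refine Finset.sum_bij (fun x _ ↦ matchZeroWith x.1 x.2) ?_ ?_ ?_ ?_
  · intro x hx
    simpa [isPfaffianPerm_matchZeroWith_iff] using hx
  · intro x _ y _ h
    obtain ⟨h₁, h₂⟩ := matchZeroWith_injective2 h
    exact Prod.ext h₁ h₂
  · intro σ hσ
    rw [mem_filter] at hσ
    obtain ⟨j, τ, rfl⟩ := exists_matchZeroWith_eq hσ.2.apply_zero
    refine ⟨(j, τ), ?_, rfl⟩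
    simpa [isPfaffianPerm_matchZeroWith_iff] using hσ.2
  · intro x _
    exact (pfTerm_matchZeroWith A x.1 x.2).symm

end FirstRowExpansion

lemma pfMatchings_zero {R : Type*} [CommRing R] (A : Matrix (Fin (2 * 0)) (Fin (2 * 0)) R) :
    pfMatchings A = 1 := by
  have h1 : IsPfaffianPerm (1 : Perm (Fin (2 * 0))) := ⟨finZeroElim, fun i ↦ i.elim0⟩
  simp [pfMatchings_eq_sum_pfTerm, pfTerm, Finset.univ_unique, Finset.filter_singleton, h1]

lemma List.eraseIdx_ofFn {α : Type*} {n : ℕ} (f : Fin (n + 1) → α) (j : Fin (n + 1)) :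
    (List.ofFn f).eraseIdx j = List.ofFn fun i ↦ f (j.succAbove i) := by
  refine List.ext_getElem (by simp [List.length_eraseIdx]; omega) fun t h₁ h₂ ↦ ?_
  simp only [List.getElem_eraseIdx, List.getElem_ofFn]
  split_ifs with h <;> congr 1 <;> ext <;> simp [Fin.succAbove, Fin.lt_def, h]

lemma wick_expansion_ofFn {R : Type*} [CommRing R] {m : ℕ} (M : Matrix (Fin m) (Fin m) R)
    (ω : List (Fin m) → R)
    (hωrec : ∀ (a : Fin m) (l : List (Fin m)),
      ω (a :: l) = ∑ j : Fin l.length,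
        (-1 : R) ^ (j : ℕ) * M a (l.get j) * ω (l.eraseIdx (j : ℕ)))
    {n : ℕ} (l : Fin (n + 2) → Fin m) :
    ω (List.ofFn l) = ∑ j : Fin (n + 1), (-1) ^ (j : ℕ) * M (l 0) (l j.succ) *
      ω (List.ofFn fun t ↦ l (j.succAbove t).succ) := by
  rw [List.ofFn_succ, hωrec]
  refine Fintype.sum_equiv (finCongr (List.length_ofFn ..)) _ _ fun j ↦ ?_
  have h := List.eraseIdx_ofFn (fun i ↦ l i.succ) (finCongr (List.length_ofFn ..) j)
  simp only [finCongr_apply, Fin.val_cast] at h ⊢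
  rw [List.get_ofFn, h]

theorem wick_moments_eq_pfaffian_minor_general
    {R : Type*} [CommRing R] {m : ℕ} (M : Matrix (Fin m) (Fin m) R)
    (ω : List (Fin m) → R)
    (hω0 : ω [] = 1)
    (hωrec : ∀ (a : Fin m) (l : List (Fin m)),
      ω (a :: l) = ∑ j : Fin l.length,
        (-1 : R) ^ (j : ℕ) * M a (l.get j) * ω (l.eraseIdx (j : ℕ)))
    (k : ℕ) (l : Fin (2 * k) → Fin m) (hl : StrictMono l) :
    ω (List.ofFn l) = pfMatchings (M.submatrix l l) := by
  induction k with
  | zero => simp [hω0, pfMatchings_zero]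
  | succ k ih =>
    rw [wick_expansion_ofFn M ω hωrec (n := 2 * k) l, pfMatchings_succ]
    refine Finset.sum_congr rfl fun j _ ↦ ?_
    have hmono : StrictMono fun t ↦ l (j.succAbove t).succ :=
      hl.comp (Fin.strictMono_succ.comp (Fin.strictMono_succAbove j))
    exact congrArg _ (ih _ hmono)

/-- Wick's theorem for Gaussian (Grassmann) moments: let `M` be an antisymmetric
matrix over a commutative ring and let `omega` be the functional on monomials
(encoded as lists of indices) determined by `omega(e_i /\ e_j) = M i j` for `i < j`
and extended by the Pfaffian (Wick expansion) rule
`omega(a :: l) = sum_j (-1)^j * M a (l j) * omega(l with j removed)`.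
Then on any increasingly ordered monomial `e_{i_1} /\ ... /\ e_{i_{2k}}`, the value of
`omega` is the Pfaffian of the corresponding `2k x 2k` submatrix of `M`. -/
theorem wick_moments_eq_pfaffian_minor
    {R : Type*} [CommRing R] {m : ℕ} (M : Matrix (Fin m) (Fin m) R)
    (hM : Mᵀ = -M)
    (ω : List (Fin m) → R)
    (hω0 : ω [] = 1)
    (hωrec : ∀ (a : Fin m) (l : List (Fin m)),
      ω (a :: l) = ∑ j : Fin l.length,
        (-1 : R) ^ (j : ℕ) * M a (l.get j) * ω (l.eraseIdx (j : ℕ)))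
    (k : ℕ) (l : Fin (2 * k) → Fin m) (hl : StrictMono l) :
    ω (List.ofFn l) = pfMatchings (M.submatrix l l) :=
  wick_moments_eq_pfaffian_minor_general M ω hω0 hωrec k l hl
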